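/- arXiv:2004.01776 — 5 statements merged into one kernel-verified Lean document; each statement's English description precedes it below -/
import Mathlib

section
/- If an almost co-Kähler manifold M of dimension 2n+1 admits a β-almost Yamabe soliton with the Reeb vector field ξ as the potential vector field, where β is nowhere zero, then ξ is a Killing vector field (i.e., M is a K-almost co-Kähler manifold). -/
/-- If an almost co-Kähler manifold `M` of dimension `2n+1` admits a
`β`-almost Yamabe soliton with the Reeb vector field `ξ` as potential vector field,
where `β` is nowhere zero, then `ξ` is Killing, i.e. `L_ξ g = 0`
(`M` is a `K`-almost co-Kähler manifold).

Vector fields form a module `VF` over the smooth functions `M → ℝ`; `g` is the metric,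
`Lξg` denotes the Lie derivative of `g` along `ξ`, `e` is a (pointwise) orthonormal frame,
and the almost co-Kähler condition `div ξ = 0` is expressed as the vanishing of the trace
of `L_ξ g`. -/
theorem stmt0 {M VF : Type*} [AddCommGroup VF] [Module (M → ℝ) VF]
    (n : ℕ)
    (g : VF → VF → M → ℝ)            -- the Riemannian metric
    (ξ : VF)                          -- the Reeb vector field
    (Lξg : VF → VF → M → ℝ)          -- the Lie derivative of g along ξ
    (lam r β : M → ℝ)                 -- soliton function, scalar curvature, β
    (e : Fin (2 * n + 1) → VF)        -- orthonormal frame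
    (honb : ∀ i j, g (e i) (e j) = fun _ => if i = j then (1 : ℝ) else 0)
    (hβ : ∀ p, β p ≠ 0)               -- β is nowhere zero
    -- β-almost Yamabe soliton with potential vector field ξ : β·(L_ξ g) = (λ - r)·g
    (hsol : ∀ X Y, β * Lξg X Y = (lam - r) * g X Y)
    -- on an almost co-Kähler manifold div ξ = 0, i.e. the trace of L_ξ g vanishes
    (hdiv : ∑ i, Lξg (e i) (e i) = 0) :
    ∀ X Y, Lξg X Y = 0 := by
  -- First show `lam - r = 0` pointwise, by tracing the soliton equation.
  have hlr : ∀ p, lam p - r p = 0 := by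
    intro p
    have htr : ∑ i, (β * Lξg (e i) (e i)) p = ∑ i, ((lam - r) * g (e i) (e i)) p := by
      refine Finset.sum_congr rfl fun i _ => ?_
      rw [hsol]
    have hL : ∑ i, (β * Lξg (e i) (e i)) p = 0 := by
      have : ∑ i, (β * Lξg (e i) (e i)) p = β p * ∑ i, Lξg (e i) (e i) p := by
        rw [Finset.mul_sum]
        exact Finset.sum_congr rfl fun i _ => rfl
      rw [this]
      have : (∑ i, Lξg (e i) (e i)) p = 0 := by rw [hdiv]; rfl
      have h2 : ∑ i, Lξg (e i) (e i) p = 0 := by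
        simpa [Finset.sum_apply] using this
      rw [h2, mul_zero]
    have hR : ∑ i, ((lam - r) * g (e i) (e i)) p
        = (lam p - r p) * (2 * n + 1 : ℝ) := by
      have : ∀ i : Fin (2 * n + 1), ((lam - r) * g (e i) (e i)) p = lam p - r p := by
        intro i
        simp [honb i i, Pi.mul_apply, Pi.sub_apply]
      rw [Finset.sum_congr rfl fun i _ => this i]
      simp [Finset.sum_const]
      ring
    have key : (lam p - r p) * (2 * n + 1 : ℝ) = 0 := by
      rw [← hR, ← htr, hL]
    have hne : (2 * n + 1 : ℝ) ≠ 0 := by positivity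
    exact (mul_eq_zero.mp key).resolve_right hne
  intro X Y
  funext p
  have h := congrFun (hsol X Y) p
  simp only [Pi.mul_apply, Pi.sub_apply] at h
  rw [hlr p, zero_mul] at h
  have := mul_eq_zero.mp h
  simpa [hβ p] using this
end

section
/- Let M be a closed (compact without boundary) (κ,μ)-almost co-Kähler manifold of dimension 2n+1 with n > 1 and κ < 0 admitting a β-almost Yamabe soliton with β nowhere zero. Then the soliton is trivial (the potential field is Killing) and λ = r = 2nκ < 0, so the soliton is expanding. -/
open MeasureTheory

/-- Let `M` be a closed (compact without boundary) `(κ,μ)`-almost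
co-Kähler manifold of dimension `2n+1` with `n > 1` and `κ < 0` admitting a
`β`-almost Yamabe soliton with `β` nowhere zero. Then the soliton is trivial
(the potential field is Killing, `L_V g = 0`), `λ = r = 2nκ < 0`, and the soliton
is expanding (`λ < 0`).

The `(κ,μ)` structure is encoded by Wang's lemma `S = μ g(h·,·) + 2nκ η⊗η` (whence
`r = 2nκ` is constant), the soliton by `β (L_V g) = (λ - r) g`; the function
`ρ = (λ - r)/β` satisfies `-Δρ = (r/2n) ρ` (equation (4) with `L_V r = 0`), and the
closedness of `M` enters through integration by parts against the volume measure. -/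
theorem stmt3 {M VF : Type*} [AddCommGroup VF] [Module (M → ℝ) VF]
    [TopologicalSpace M] [CompactSpace M] [MeasurableSpace M]
    (μvol : Measure M) [μvol.IsOpenPosMeasure] [IsFiniteMeasure μvol]
    (n : ℕ) (hn : 1 < n) (κ : ℝ) (hκ : κ < 0) (μf : M → ℝ)
    (g : VF → VF → M → ℝ)             -- the Riemannian metric
    (S : VF → VF → M → ℝ)             -- the Ricci tensor
    (h : VF → VF)                      -- the tensor h = (1/2) L_ξ φ
    (η : VF → M → ℝ)                   -- the contact 1-form
    (r lam β : M → ℝ)                  -- scalar curvature, soliton function, β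
    (Lg : VF → VF → M → ℝ)             -- the Lie derivative of g along the potential V
    (Δ : (M → ℝ) → M → ℝ)              -- the Laplace–Beltrami operator
    (gradsq : (M → ℝ) → M → ℝ)         -- u ↦ |∇u|²
    (e : Fin (2 * n + 1) → VF)         -- orthonormal frame
    (honb : ∀ i j, g (e i) (e j) = fun _ => if i = j then (1 : ℝ) else 0)
    (hβ : ∀ p, β p ≠ 0)
    -- the β-almost Yamabe soliton equation
    (hsol : ∀ X Y, β * Lg X Y = (lam - r) * g X Y)
    -- Wang's lemma, trace-freeness of h, unit ξ, and r as trace of S : so r = 2nκ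
    (hQ : ∀ X Y, S X Y = μf * g (h X) Y + (fun _ => 2 * (n : ℝ) * κ) * (η X * η Y))
    (htrh : ∑ i, g (h (e i)) (e i) = 0)
    (hηe : ∑ i, η (e i) * η (e i) = 1)
    (hr : r = ∑ i, S (e i) (e i))
    -- ρ := (λ - r)/β satisfies -Δρ = (r/(2n))ρ  (equation (4), L_V r = 0)
    (hKY : ∀ p, -(Δ (fun q => (lam q - r q) / β q) p)
        = (r p / (2 * (n : ℝ))) * ((lam p - r p) / β p))
    -- integration by parts on the closed manifold M
    (hIBP : ∫ p, ((lam p - r p) / β p) * Δ (fun q => (lam q - r q) / β q) p ∂μvol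
        = -∫ p, gradsq (fun q => (lam q - r q) / β q) p ∂μvol)
    (hgrad : ∀ u : M → ℝ, ∀ p, 0 ≤ gradsq u p)
    (hcont : Continuous fun p => (lam p - r p) / β p)
    (hint1 : Integrable (fun p => ((lam p - r p) / β p) * ((lam p - r p) / β p)) μvol)
    (hint2 : Integrable (gradsq fun q => (lam q - r q) / β q) μvol) :
    (∀ X Y, Lg X Y = 0) ∧ lam = r ∧ lam = (fun _ => 2 * (n : ℝ) * κ) ∧ ∀ p, lam p < 0 := by
  set ρ : M → ℝ := fun q => (lam q - r q) / β q with hρ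
  have hnpos : (0:ℝ) < 2 * (n:ℝ) := by positivity
  -- r is the constant 2nκ
  have hrconst : ∀ p, r p = 2 * (n:ℝ) * κ := by
    intro p
    have h1 := congrFun hr p
    have h2 : (∑ i, S (e i) (e i)) p = ∑ i, S (e i) (e i) p := by
      simp [Finset.sum_apply]
    rw [h2] at h1
    have h3 : ∀ i, S (e i) (e i) p
        = μf p * g (h (e i)) (e i) p + 2 * (n:ℝ) * κ * (η (e i) p * η (e i) p) := by
      intro i
      have := congrFun (hQ (e i) (e i)) p
      simpa [Pi.mul_apply, Pi.add_apply] using this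
    have htrh' : ∑ i, g (h (e i)) (e i) p = 0 := by
      have := congrFun htrh p
      simpa [Finset.sum_apply] using this
    have hηe' : ∑ i, η (e i) p * η (e i) p = 1 := by
      have := congrFun hηe p
      simpa [Finset.sum_apply, Pi.mul_apply] using this
    calc r p = ∑ i, (μf p * g (h (e i)) (e i) p
          + 2 * (n:ℝ) * κ * (η (e i) p * η (e i) p)) := by
          rw [h1]; exact Finset.sum_congr rfl fun i _ => h3 i
      _ = μf p * (∑ i, g (h (e i)) (e i) p)
          + 2 * (n:ℝ) * κ * (∑ i, η (e i) p * η (e i) p) := by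
          rw [Finset.sum_add_distrib, Finset.mul_sum, Finset.mul_sum]
      _ = 2 * (n:ℝ) * κ := by rw [htrh', hηe']; ring
  -- Δρ = -κ ρ
  have hΔ : ∀ p, Δ ρ p = -κ * ρ p := by
    intro p
    have h1 := hKY p
    have hq : r p / (2 * (n:ℝ)) = κ := by
      rw [hrconst p]; field_simp
    rw [hq] at h1
    show Δ ρ p = -κ * ((lam p - r p) / β p)
    linarith
  -- integral of ρ² is zero
  have hintρ : ∫ p, ρ p * ρ p ∂μvol = 0 := by
    have h1 : ∫ p, ρ p * Δ ρ p ∂μvol = -κ * ∫ p, ρ p * ρ p ∂μvol := by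
      rw [← integral_const_mul]
      apply integral_congr_ae
      filter_upwards with p
      rw [hΔ p]; ring
    have h2 : -κ * ∫ p, ρ p * ρ p ∂μvol = -∫ p, gradsq ρ p ∂μvol := by
      rw [← h1]; exact hIBP
    have hg : 0 ≤ ∫ p, gradsq ρ p ∂μvol := integral_nonneg fun p => hgrad ρ p
    have hρ2 : 0 ≤ ∫ p, ρ p * ρ p ∂μvol := integral_nonneg fun p => mul_self_nonneg _
    nlinarith
  -- ρ = 0 everywhere
  have hρ0 : ∀ p, ρ p = 0 := by
    have hae : (fun p => ρ p * ρ p) =ᵐ[μvol] 0 :=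
      (integral_eq_zero_iff_of_nonneg (fun p => mul_self_nonneg _) hint1).mp hintρ
    have hc : Continuous fun p => ρ p * ρ p := hcont.mul hcont
    have heq : (fun p => ρ p * ρ p) = 0 :=
      (Continuous.ae_eq_iff_eq μvol hc continuous_const).mp hae
    intro p
    have := congrFun heq p
    simp only [Pi.zero_apply] at this
    nlinarith [this]
  have hlamr : ∀ p, lam p = r p := by
    intro p
    have := hρ0 p
    have h0 : lam p - r p = 0 := by
      rcases div_eq_zero_iff.mp this with h | h
      · exact h
      · exact absurd h (hβ p)
    linarith
  refine ⟨?_, funext hlamr, ?_, ?_⟩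
  · intro X Y
    funext p
    have := congrFun (hsol X Y) p
    simp only [Pi.mul_apply, Pi.sub_apply] at this
    have h0 : lam p - r p = 0 := by rw [hlamr p]; ring
    rw [h0, zero_mul] at this
    exact (mul_eq_zero.mp this).resolve_left (hβ p)
  · funext p
    rw [hlamr p, hrconst p]
  · intro p
    rw [hlamr p, hrconst p]
    have : (0:ℝ) < 2 * (n:ℝ) := hnpos
    nlinarith
end

section
/- If an almost co-Kähler manifold admits a β-almost Yamabe soliton whose potential vector field V is a torqued vector field (∇_X V = fX + θ(X)V with θ(V) = 0), then λ = r + 2fβ. -/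
/-- If an almost co-Kähler manifold admits a `β`-almost Yamabe
soliton whose potential vector field `V` is a torqued vector field
(`∇_X V = f X + θ(X) V` with `θ(V) = 0`, `V` nowhere zero), then `λ = r + 2fβ`.

`(L_V g)(X,Y) = g(∇_X V, Y) + g(X, ∇_Y V)` and the soliton equation is
`β (L_V g) = (λ - r) g`; the conclusion follows by tracing over an orthonormal
frame `e`, using the frame expansion `∑ θ(eᵢ) g(V,eᵢ) = θ(V)`. -/
theorem stmt8 {M VF : Type*} [AddCommGroup VF] [Module (M → ℝ) VF]
    (n : ℕ)
    (g : VF → VF → M → ℝ)              -- the Riemannian metric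
    (nabla : VF → VF → VF)             -- the Levi-Civita connection
    (V : VF)                            -- the potential vector field
    (f : M → ℝ) (θ : VF → M → ℝ)       -- torse forming data
    (lam r β : M → ℝ)
    (Lg : VF → VF → M → ℝ)             -- L_V g
    (e : Fin (2 * n + 1) → VF)          -- orthonormal frame
    (honb : ∀ i j, g (e i) (e j) = fun _ => if i = j then (1 : ℝ) else 0)
    -- g is bilinear over functions in the first argument and symmetric
    (hg2 : ∀ (a b : M → ℝ) (X Y Z : VF), g (a • X + b • Y) Z = a * g X Z + b * g Y Z)
    (hgsym : ∀ X Y, g X Y = g Y X)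
    -- (L_V g)(X,Y) = g(∇_X V, Y) + g(X, ∇_Y V)
    (hLg : ∀ X Y, Lg X Y = g (nabla X V) Y + g X (nabla Y V))
    -- V is torse forming
    (htf : ∀ X, nabla X V = f • X + θ X • V)
    -- frame expansion of V : ∑ θ(eᵢ) g(V,eᵢ) = θ(V)
    (hframe : ∑ i, θ (e i) * g V (e i) = θ V)
    -- the β-almost Yamabe soliton equation
    (hsol : ∀ X Y, β * Lg X Y = (lam - r) * g X Y)
    -- V is torqued : θ(V) = 0 and V is nowhere zero
    (hθV : θ V = 0) (hV : V ≠ 0) :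
    lam = r + 2 * f * β := by
  funext x
  -- pointwise diagonal soliton equation on the frame
  have h1 : ∀ i : Fin (2 * n + 1),
      β x * (2 * f x + 2 * (θ (e i) x * g V (e i) x)) = lam x - r x := by
    intro i
    have hL : Lg (e i) (e i) = fun y => 2 * f y + 2 * (θ (e i) y * g V (e i) y) := by
      rw [hLg, htf, hgsym (e i), hg2, honb]
      funext y
      simp [Pi.add_apply, Pi.mul_apply]
      ring
    have := congrFun (hsol (e i) (e i)) x
    rw [hL, honb] at this
    simpa using this
  have H : ∑ i : Fin (2 * n + 1), (β x * (2 * f x + 2 * (θ (e i) x * g V (e i) x)))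
      = ∑ _i : Fin (2 * n + 1), (lam x - r x) :=
    Finset.sum_congr rfl (fun i _ => h1 i)
  have hframe' : ∑ i : Fin (2 * n + 1), θ (e i) x * g V (e i) x = 0 := by
    have := congrFun hframe x
    simp only [Finset.sum_apply, Pi.mul_apply] at this
    rw [this, hθV]; rfl
  have hcard : ((2 * n + 1 : ℕ) : ℝ) ≠ 0 := by positivity
  rw [Finset.sum_const, Finset.card_univ, Fintype.card_fin, nsmul_eq_mul] at H
  have HL : ∑ i : Fin (2 * n + 1), (β x * (2 * f x + 2 * (θ (e i) x * g V (e i) x)))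
      = ((2 * n + 1 : ℕ) : ℝ) * (β x * (2 * f x))
        + 2 * β x * ∑ i : Fin (2 * n + 1), θ (e i) x * g V (e i) x := by
    simp only [mul_add, Finset.sum_add_distrib, Finset.sum_const, Finset.card_univ,
      Fintype.card_fin, nsmul_eq_mul, Finset.mul_sum]
    congr 1
    exact Finset.sum_congr rfl fun i _ => by ring
  rw [HL, hframe'] at H
  have : lam x - r x = 2 * f x * β x := by
    have h2 : ((2 * n + 1 : ℕ) : ℝ) * (β x * (2 * f x))
        = ((2 * n + 1 : ℕ) : ℝ) * (lam x - r x) := by linarith [H]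
    have := mul_left_cancel₀ hcard h2
    linarith
  simp only [Pi.add_apply, Pi.mul_apply, Pi.ofNat_apply]
  push_cast
  linarith
end

section
/- If a (κ,μ)-almost co-Kähler manifold (M^{2n+1}, φ, ξ, η, g) admits a β-almost Ricci soliton with the Reeb vector field ξ as the potential vector field and β nowhere zero, then ∇_ξ ξ = 0 (ξ is geodesic) and λ = -2nκ; in particular the soliton is expanding, steady, or shrinking according as κ is negative, zero, or positive. -/
/-- If a `(κ,μ)`-almost co-Kähler manifold `(M^{2n+1}, φ, ξ, η, g)`
admits a `β`-almost Ricci soliton with the Reeb vector field `ξ` as potential vector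
field and `β` nowhere zero, then `∇_ξ ξ = 0` (`ξ` is geodesic) and `λ = -2nκ`; in
particular the soliton is expanding, steady, or shrinking according as `κ` is
negative, zero, or positive.

The `(κ,μ)`-condition gives `S(X,ξ) = 2nκ η(X)`; the soliton equation is
`β (L_ξ g) + 2S + 2λ g = 0` with `(L_ξ g)(X,Y) = g(∇_X ξ, Y) + g(X, ∇_Y ξ)`;
`g(∇_X ξ, ξ) = 0` since `ξ` is unit. -/
theorem stmt9 {M VF : Type*} [AddCommGroup VF] [Module (M → ℝ) VF]
    (n : ℕ) (hn : 0 < n) (κ : ℝ)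
    (g : VF → VF → M → ℝ)              -- the Riemannian metric
    (S : VF → VF → M → ℝ)              -- the Ricci tensor
    (nabla : VF → VF → VF)             -- the Levi-Civita connection
    (ξ : VF) (η : VF → M → ℝ)
    (lam β : M → ℝ)
    (hβ : ∀ p, β p ≠ 0)
    (hgsym : ∀ X Y, g X Y = g Y X)
    (hSsym : ∀ X Y, S X Y = S Y X)
    (hnd : ∀ Z, (∀ X, g X Z = 0) → Z = 0)
    (hη : ∀ X, η X = g X ξ) (hηξ : η ξ = 1)
    -- ξ is unit, so g(∇_X ξ, ξ) = 0
    (hunit : ∀ X, g (nabla X ξ) ξ = 0)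
    -- the (κ,μ)-nullity condition gives S(X,ξ) = 2nκ η(X)
    (hSξ : ∀ X, S X ξ = (fun _ => 2 * (n : ℝ) * κ) * η X)
    -- the β-almost Ricci soliton equation with potential vector field ξ
    (hsol : ∀ X Y, β * (g (nabla X ξ) Y + g X (nabla Y ξ)) + 2 * S X Y
        + 2 * lam * g X Y = 0) :
    nabla ξ ξ = 0 ∧ lam = (fun _ => -(2 * (n : ℝ) * κ)) ∧
      (κ < 0 → ∀ p, 0 < lam p) ∧ (κ = 0 → lam = 0) ∧ (0 < κ → ∀ p, lam p < 0) := by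

  have hn' : (0:ℝ) < n := by exact_mod_cast hn
  have hgξξ : g ξ ξ = 1 := by rw [← hη]; exact hηξ
  have hlam : lam = (fun _ => -(2 * (n : ℝ) * κ)) := by
    funext p
    have h := congrFun (hsol ξ ξ) p
    simp only [Pi.add_apply, Pi.mul_apply, Pi.zero_apply, Pi.ofNat_apply,
      hunit ξ, hgξξ, hSξ ξ, hηξ] at h
    have h2 := congrFun (hgsym ξ (nabla ξ ξ)) p
    have h3 := congrFun (hunit ξ) p
    simp only [Pi.zero_apply, Pi.one_apply] at h h2 h3 ⊢
    rw [h2, h3] at h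
    push_cast at h
    linarith
  have hgeo : nabla ξ ξ = 0 := by
    apply hnd
    intro X
    funext p
    have h := congrFun (hsol X ξ) p
    have h1 := congrFun (hunit X) p
    have h2 := congrFun (hSξ X) p
    have h3 := congrFun (hη X) p
    have h4 := congrFun hlam p
    simp only [Pi.add_apply, Pi.mul_apply, Pi.zero_apply, Pi.ofNat_apply] at h h1 h2 h3 h4 ⊢
    rw [h1, h2, h3, h4] at h
    push_cast at h
    have : β p * g X (nabla ξ ξ) p = 0 := by linarith
    exact (mul_eq_zero.mp this).resolve_left (hβ p)
  refine ⟨hgeo, hlam, ?_, ?_, ?_⟩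
  · intro hκ p
    rw [hlam]; simp only; nlinarith
  · intro hκ
    rw [hlam]; funext p; simp [hκ]
  · intro hκ p
    rw [hlam]; simp only; nlinarith
end

section
/- If a (κ,μ)-almost co-Kähler manifold (M^{2n+1}, φ, ξ, η, g) admits a β-almost Ricci soliton with potential vector field ξ, where ξ is torse forming (∇_X ξ = f(X - η(X)ξ)), then M is η-Einstein: the Ricci tensor satisfies S(X,Y) = -(fβ + λ)g(X,Y) + fβ·η(X)η(Y). -/
/-- If a `(κ,μ)`-almost co-Kähler manifold `(M^{2n+1}, φ, ξ, η, g)`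
admits a `β`-almost Ricci soliton with potential vector field `ξ`, where `ξ` is torse
forming (`∇_X ξ = f (X - η(X) ξ)`), then `M` is `η`-Einstein:
`S(X,Y) = -(fβ + λ) g(X,Y) + fβ η(X) η(Y)`.

The soliton equation is `β (L_ξ g) + 2S + 2λ g = 0` with
`(L_ξ g)(X,Y) = g(∇_X ξ, Y) + g(X, ∇_Y ξ)`. -/
theorem stmt11 {M VF : Type*} [AddCommGroup VF] [Module (M → ℝ) VF]
    (n : ℕ) (κ μc : ℝ)
    (g : VF → VF → M → ℝ)              -- the Riemannian metric
    (S : VF → VF → M → ℝ)              -- the Ricci tensor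
    (nabla : VF → VF → VF)             -- the Levi-Civita connection
    (ξ : VF) (η : VF → M → ℝ)
    (f lam β : M → ℝ)
    -- g is bilinear over functions in the first argument and symmetric
    (hg2 : ∀ (a b : M → ℝ) (X Y Z : VF), g (a • X + b • Y) Z = a * g X Z + b * g Y Z)
    (hgsym : ∀ X Y, g X Y = g Y X)
    (hη : ∀ X, η X = g X ξ) (hηξ : η ξ = 1)
    -- ξ is torse forming with θ = -f η
    (htf : ∀ X, nabla X ξ = f • (X - η X • ξ))
    -- the β-almost Ricci soliton equation with potential vector field ξ
    (hsol : ∀ X Y, β * (g (nabla X ξ) Y + g X (nabla Y ξ)) + 2 * S X Y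
        + 2 * lam * g X Y = 0) :
    ∀ X Y, S X Y = -((f * β + lam)) * g X Y + f * β * (η X * η Y) := by
  have key : ∀ X Y, g (nabla X ξ) Y = f * g X Y - f * (η X * η Y) := by
    intro X Y
    have h1 : nabla X ξ = f • X + (-(f * η X)) • ξ := by
      rw [htf, smul_sub, smul_smul, sub_eq_add_neg, neg_smul]
    have h2 : g ξ Y = η Y := by rw [hgsym, ← hη]
    rw [h1, hg2, h2]; ring
  intro X Y
  have h := hsol X Y
  rw [key X Y, hgsym X (nabla Y ξ), key Y X, hgsym Y X] at h
  funext x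
  have hx := congrFun h x
  simp only [Pi.add_apply, Pi.mul_apply, Pi.sub_apply, Pi.neg_apply, Pi.ofNat_apply,
    Pi.zero_apply] at hx ⊢
  push_cast at hx
  linarith
end
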